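/- Let d ≥ 1, let P : ℝ^d → ℝ be a polynomial of degree k ≥ 1, and let x ∈ ℝ^d. Then liminf_{R→∞} R^{−(d+k)} ∫_{{y ∈ ℝ^d : R < |x−y| < 2R}} |P(y)| dy > 0. -/

import Mathlib

open MeasureTheory Filter Topology

noncomputable section

abbrev Ed (d : ℕ) := EuclideanSpace ℝ (Fin d)

/-- A real-valued test function: smooth with compact support. -/
def IsTestFn {d : ℕ} (φ : Ed d → ℝ) : Prop :=
  ContDiff ℝ (⊤ : ℕ∞) φ ∧ HasCompactSupport φ

/-- Fourier transform `𝓕φ(ξ) = ∫ φ(x) e^{-2πi x·ξ} dx`. -/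
noncomputable def fourierT {d : ℕ} (φ : Ed d → ℝ) (ξ : Ed d) : ℂ :=
  ∫ x : Ed d, (φ x : ℂ) * Complex.exp (-(2 * Real.pi * Complex.I * ((inner ℝ x ξ : ℝ) : ℂ)))

/-- Fractional Laplacian of a test function, `(-Δ)^σ φ(x) = ∫ (2π|ξ|)^{2σ} 𝓕φ(ξ) e^{2πi x·ξ} dξ`. -/
noncomputable def fracLap {d : ℕ} (σ : ℝ) (φ : Ed d → ℝ) (x : Ed d) : ℝ :=
  (∫ ξ : Ed d, (((2 * Real.pi * ‖ξ‖) ^ (2 * σ) : ℝ) : ℂ) * fourierT φ ξ *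
      Complex.exp (2 * Real.pi * Complex.I * ((inner ℝ x ξ : ℝ) : ℂ))).re

/-- Homogeneous Sobolev norm of a test function. -/
noncomputable def sobolevNorm {d : ℕ} (s : ℝ) (φ : Ed d → ℝ) : ℝ :=
  Real.sqrt (∫ ξ : Ed d, (2 * Real.pi * ‖ξ‖) ^ (2 * s) * ‖fourierT φ ξ‖ ^ 2)

/-- Membership in the dual space Ḣ^{-s}. -/
def MemHNeg {d : ℕ} (s : ℝ) (T : Ed d → ℝ) : Prop :=
  ∃ C : ℝ, 0 ≤ C ∧ ∀ φ : Ed d → ℝ, IsTestFn φ →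
    |∫ x, T x * φ x| ≤ C * sobolevNorm s φ

/-- The Ḣ^{-s} norm: the least admissible constant. -/
noncomputable def negNorm {d : ℕ} (s : ℝ) (T : Ed d → ℝ) : ℝ :=
  sInf {C : ℝ | 0 ≤ C ∧ ∀ φ : Ed d → ℝ, IsTestFn φ →
    |∫ x, T x * φ x| ≤ C * sobolevNorm s φ}

/-- `φ` is an approximating sequence for `u` in Ḣ^s: test functions, Cauchy in the
Ḣ^s norm, converging to `u` in L^{2d/(d-2s)}. -/
def ApproxSeq {d : ℕ} (s : ℝ) (u : Ed d → ℝ) (φ : ℕ → Ed d → ℝ) : Prop :=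
  (∀ n, IsTestFn (φ n)) ∧
  (∀ ε : ℝ, 0 < ε → ∃ N : ℕ, ∀ m ≥ N, ∀ n ≥ N,
    sobolevNorm s (fun x => φ m x - φ n x) < ε) ∧
  Tendsto (fun n => eLpNorm (fun x => u x - φ n x)
      (ENNReal.ofReal (2 * d / (d - 2 * s))) volume) atTop (𝓝 0)

/-- Membership in the homogeneous Sobolev space Ḣ^s. -/
def MemHs {d : ℕ} (s : ℝ) (u : Ed d → ℝ) : Prop :=
  MemLp u (ENNReal.ofReal (2 * d / (d - 2 * s))) volume ∧
  ∃ φ : ℕ → Ed d → ℝ, ApproxSeq s u φ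

/-- The weighted space 𝓛¹_{2s}. -/
def MemWeightedL1 {d : ℕ} (s : ℝ) (u : Ed d → ℝ) : Prop :=
  LocallyIntegrable u volume ∧
  Integrable (fun x => |u x| / (1 + ‖x‖) ^ ((d : ℝ) + 2 * s)) volume

/-- Local L^q membership. -/
def MemLqLoc {d : ℕ} (q : ℝ) (T : Ed d → ℝ) : Prop :=
  ∀ K : Set (Ed d), IsCompact K → MemLp T (ENNReal.ofReal q) (volume.restrict K)

/-- The Riesz constant `A_α`. -/
noncomputable def rieszA (d : ℕ) (α : ℝ) : ℝ :=
  Real.Gamma (((d : ℝ) - α) / 2) / (Real.pi ^ ((d : ℝ) / 2) * 2 ^ α * Real.Gamma (α / 2))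

/-- The Riesz potential `I_α * T`. -/
noncomputable def rieszPot {d : ℕ} (α : ℝ) (T : Ed d → ℝ) (x : Ed d) : ℝ :=
  rieszA d α * ∫ y, T y * ‖x - y‖ ^ (α - (d : ℝ))

/-- Iterated partial derivative corresponding to a multi-index `n : Fin d → ℕ`. -/
noncomputable def pderivMulti {d : ℕ} (n : Fin d → ℕ) (v : Ed d → ℝ) : Ed d → ℝ :=
  (List.finRange d).foldr
    (fun i f => (fun (g : Ed d → ℝ) (x : Ed d) => fderiv ℝ g x (EuclideanSpace.single i 1))^[n i] f) v

end
namespace PolyAnnulusAux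

variable {d : ℕ}

noncomputable def gp (x : EuclideanSpace ℝ (Fin d)) (i : Fin d) :
    Polynomial (MvPolynomial (Fin d) ℝ) :=
  Polynomial.C (MvPolynomial.X i) * Polynomial.X + Polynomial.C (MvPolynomial.C (x i))

noncomputable def shiftQ (x : EuclideanSpace ℝ (Fin d)) (P : MvPolynomial (Fin d) ℝ) :
    Polynomial (MvPolynomial (Fin d) ℝ) :=
  MvPolynomial.aeval (gp x) P

lemma coeff_gp_one (x : EuclideanSpace ℝ (Fin d)) (i : Fin d) :
    (gp x i).coeff 1 = MvPolynomial.X i := by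
  simp [gp, Polynomial.coeff_C]

lemma natDegree_gp (x : EuclideanSpace ℝ (Fin d)) (i : Fin d) : (gp x i).natDegree = 1 := by
  refine le_antisymm ?_ (Polynomial.le_natDegree_of_ne_zero ?_)
  · refine (Polynomial.natDegree_add_le _ _).trans ?_
    simp only [Polynomial.natDegree_C, max_le_iff]
    constructor
    · exact (Polynomial.natDegree_mul_le).trans (by simp)
    · omega
  · rw [coeff_gp_one]; exact MvPolynomial.X_ne_zero i

lemma gp_ne_zero (x : EuclideanSpace ℝ (Fin d)) (i : Fin d) : gp x i ≠ 0 := by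
  intro h
  have := coeff_gp_one x i
  rw [h] at this
  simp at this
  exact MvPolynomial.X_ne_zero i this.symm

lemma leadingCoeff_gp (x : EuclideanSpace ℝ (Fin d)) (i : Fin d) :
    (gp x i).leadingCoeff = MvPolynomial.X i := by
  rw [Polynomial.leadingCoeff, natDegree_gp, coeff_gp_one]

lemma eval_shiftQ (x : EuclideanSpace ℝ (Fin d)) (P : MvPolynomial (Fin d) ℝ) (t : ℝ)
    (w : Fin d → ℝ) :
    Polynomial.eval t (Polynomial.map (MvPolynomial.eval w) (shiftQ x P))
      = MvPolynomial.eval (fun i => x i + t * w i) P := by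
  induction P using MvPolynomial.induction_on with
  | C a => simp [shiftQ, gp]
  | add p q hp hq => simp only [shiftQ, map_add, Polynomial.map_add, Polynomial.eval_add] at hp hq ⊢; rw [hp, hq]
  | mul_X p i hp =>
      simp only [shiftQ, map_mul, Polynomial.map_mul, Polynomial.eval_mul] at hp ⊢
      rw [hp]
      congr 1
      simp [gp]
      ring

lemma natDegree_term_le (x : EuclideanSpace ℝ (Fin d)) (m : Fin d →₀ ℕ) (c : ℝ) :
    (MvPolynomial.aeval (gp x) (MvPolynomial.monomial m c)).natDegree
      ≤ m.sum fun _ e => e := by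
  rw [MvPolynomial.aeval_monomial]
  refine (Polynomial.natDegree_mul_le).trans ?_
  have h1 : (algebraMap ℝ (Polynomial (MvPolynomial (Fin d) ℝ)) c).natDegree = 0 := by
    simp [Polynomial.algebraMap_apply]
  rw [h1, zero_add]
  refine (Polynomial.natDegree_prod_le _ _).trans ?_
  rw [Finsupp.sum]
  apply Finset.sum_le_sum
  intro i _
  exact (Polynomial.natDegree_pow_le).trans (by rw [natDegree_gp]; omega)

lemma natDegree_shiftQ_le (x : EuclideanSpace ℝ (Fin d)) (P : MvPolynomial (Fin d) ℝ) :
    (shiftQ x P).natDegree ≤ P.totalDegree := by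
  conv_lhs => rw [shiftQ, ← P.support_sum_monomial_coeff, map_sum]
  apply Polynomial.natDegree_sum_le_of_forall_le
  intro m hm
  exact (natDegree_term_le x m _).trans (MvPolynomial.le_totalDegree hm)

lemma coeff_term (x : EuclideanSpace ℝ (Fin d)) (m : Fin d →₀ ℕ) (c : ℝ) :
    (MvPolynomial.aeval (gp x) (MvPolynomial.monomial m c)).coeff (m.sum fun _ e => e)
      = MvPolynomial.monomial m c := by
  rw [MvPolynomial.aeval_monomial]
  have hfac : ∀ i ∈ m.support, gp x i ^ m i ≠ 0 :=
    fun i _ => pow_ne_zero _ (gp_ne_zero x i)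
  have hdeg : (m.prod fun i e => gp x i ^ e).natDegree = m.sum fun _ e => e := by
    rw [Finsupp.prod, Polynomial.natDegree_prod _ _ hfac, Finsupp.sum]
    apply Finset.sum_congr rfl
    intro i _
    rw [Polynomial.natDegree_pow, natDegree_gp, mul_one]
  have hlead : (m.prod fun i e => gp x i ^ e).leadingCoeff
      = m.prod fun i e => MvPolynomial.X i ^ e := by
    rw [Finsupp.prod, Polynomial.leadingCoeff_prod, Finsupp.prod]
    apply Finset.prod_congr rfl
    intro i _
    rw [Polynomial.leadingCoeff_pow, leadingCoeff_gp]
  rw [Polynomial.algebraMap_apply, Polynomial.coeff_C_mul, ← hdeg,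
    Polynomial.coeff_natDegree, hlead, MvPolynomial.monomial_eq]
  simp

lemma coeff_shiftQ_totalDegree (x : EuclideanSpace ℝ (Fin d)) (P : MvPolynomial (Fin d) ℝ) :
    (shiftQ x P).coeff P.totalDegree
      = MvPolynomial.homogeneousComponent P.totalDegree P := by
  set k := P.totalDegree with hk
  conv_lhs => rw [shiftQ, ← P.support_sum_monomial_coeff, map_sum, Polynomial.finset_sum_coeff]
  rw [MvPolynomial.homogeneousComponent_apply, Finset.sum_filter]
  apply Finset.sum_congr rfl
  intro m hm
  by_cases h : m.degree = P.totalDegree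
  · rw [if_pos h]
    have hsum : (m.sum fun _ e => e) = k := h
    rw [← hsum, coeff_term]
  · rw [if_neg h]
    apply Polynomial.coeff_eq_zero_of_natDegree_lt
    have h1 : (m.sum fun _ e => e) ≤ k := MvPolynomial.le_totalDegree hm
    have h2 : (m.sum fun _ e => e) ≠ k := fun hc => h hc
    exact lt_of_le_of_lt (natDegree_term_le x m _) (lt_of_le_of_ne h1 h2)

lemma homogComp_ne_zero (P : MvPolynomial (Fin d) ℝ) (hP : P ≠ 0) :
    MvPolynomial.homogeneousComponent P.totalDegree P ≠ 0 := by
  obtain ⟨m, hm, hms⟩ := Finset.exists_mem_eq_sup P.support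
    (MvPolynomial.support_nonempty.mpr hP) (fun m => m.sum fun _ e => e)
  intro h0
  have hc : MvPolynomial.coeff m (MvPolynomial.homogeneousComponent P.totalDegree P)
      = MvPolynomial.coeff m P := by
    rw [MvPolynomial.coeff_homogeneousComponent, if_pos]
    show (m.sum fun _ e => e) = P.totalDegree
    rw [MvPolynomial.totalDegree, hms]
  rw [h0] at hc
  simp only [MvPolynomial.coeff_zero] at hc
  exact (MvPolynomial.mem_support_iff.mp hm) hc.symm

lemma eval_smul_homog {n : ℕ} {p : MvPolynomial (Fin d) ℝ} (hp : p.IsHomogeneous n)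
    (s : ℝ) (w : Fin d → ℝ) :
    MvPolynomial.eval (fun i => s * w i) p = s ^ n * MvPolynomial.eval w p := by
  rw [MvPolynomial.eval_eq', MvPolynomial.eval_eq', Finset.mul_sum]
  apply Finset.sum_congr rfl
  intro m hm
  have hdeg : ∑ i, m i = n := by
    have := hp (MvPolynomial.mem_support_iff.mp hm)
    rw [← this]
    rw [Finsupp.weight_apply, Finsupp.sum]
    rw [Finset.sum_subset (Finset.subset_univ m.support)]
    · simp
    · intro i _ hi
      simp [Finsupp.notMem_support_iff.mp hi]
  calc MvPolynomial.coeff m p * ∏ i, (s * w i) ^ m i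
      = MvPolynomial.coeff m p * ((∏ i, s ^ m i) * ∏ i, w i ^ m i) := by
        rw [← Finset.prod_mul_distrib]; simp [mul_pow]
    _ = s ^ n * (MvPolynomial.coeff m p * ∏ i, w i ^ m i) := by
        rw [Finset.prod_pow_eq_pow_sum, hdeg]; ring

end PolyAnnulusAux


open PolyAnnulusAux in
set_option maxHeartbeats 1000000 in
/-- lower bound for annulus averages of a polynomial of degree `k ≥ 1`. -/
theorem polynomial_annulus_lower_bound {d : ℕ} (hd : 1 ≤ d)
    (P : MvPolynomial (Fin d) ℝ) (k : ℕ) (hdeg : P.totalDegree = k) (hk : 1 ≤ k)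
    (x : Ed d) :
    0 < Filter.liminf (fun R : ℝ =>
      (∫⁻ y in {y : Ed d | R < dist x y ∧ dist x y < 2 * R},
        ENNReal.ofReal |MvPolynomial.eval (fun i => y i) P|) /
      ENNReal.ofReal (R ^ (d + k))) atTop := by
  classical
  haveI : Nonempty (Fin d) := ⟨⟨0, hd⟩⟩
  have hPne : P ≠ 0 := by
    intro h
    rw [h, MvPolynomial.totalDegree_zero] at hdeg
    omega
  set H := MvPolynomial.homogeneousComponent k P with hH
  have hHhom : H.IsHomogeneous k := MvPolynomial.homogeneousComponent_isHomogeneous k P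
  have hHne : H ≠ 0 := by rw [hH, ← hdeg]; exact homogComp_ne_zero P hPne
  obtain ⟨w1, hw1⟩ : ∃ w : Fin d → ℝ, MvPolynomial.eval w H ≠ 0 := by
    by_contra hc
    push_neg at hc
    exact hHne (MvPolynomial.funext fun w => by rw [hc w, map_zero])
  set w1v : EuclideanSpace ℝ (Fin d) := WithLp.toLp 2 w1 with hw1v
  have hw1vne : w1v ≠ 0 := by
    intro h0
    apply hw1
    have hz : w1 = fun i => (0:ℝ) * w1 i := by
      funext i
      have : w1 i = w1v i := rfl
      rw [this, h0]
      simp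
    calc MvPolynomial.eval w1 H = MvPolynomial.eval (fun i => (0:ℝ) * w1 i) H := by rw [← hz]
      _ = 0 ^ k * MvPolynomial.eval w1 H := eval_smul_homog hHhom 0 w1
      _ = 0 := by rw [zero_pow (by omega : k ≠ 0), zero_mul]
  have hw1norm : 0 < ‖w1v‖ := norm_pos_iff.mpr hw1vne
  set s : ℝ := 3 / (2 * ‖w1v‖) with hs
  have hspos : 0 < s := by positivity
  set w0 : EuclideanSpace ℝ (Fin d) := s • w1v with hw0
  have hw0norm : ‖w0‖ = 3 / 2 := by
    rw [hw0, norm_smul, Real.norm_eq_abs, abs_of_pos hspos, hs]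
    field_simp
  have hw0coord : (fun i => w0 i) = fun i => s * w1 i := by
    funext i; rw [hw0]; simp [PiLp.smul_apply, hw1v]
  set F : EuclideanSpace ℝ (Fin d) → ℝ := fun w => MvPolynomial.eval (fun i => w i) H with hF
  set δ : ℝ := |F w0| with hδdef
  have hδ : 0 < δ := by
    rw [hδdef, hF]
    simp only [hw0coord]
    rw [eval_smul_homog hHhom s w1]
    positivity
  have hFcont : Continuous F :=
    (MvPolynomial.continuous_eval H).comp (PiLp.continuous_ofLp 2 fun _ : Fin d => ℝ)
  -- radius r' from continuity
  have hUopen : IsOpen {w : EuclideanSpace ℝ (Fin d) | δ / 2 < |F w|} :=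
    isOpen_lt continuous_const hFcont.abs
  have hw0U : w0 ∈ {w : EuclideanSpace ℝ (Fin d) | δ / 2 < |F w|} := by
    simp only [Set.mem_setOf_eq, ← hδdef]
    linarith
  obtain ⟨r0, hr0pos, hr0sub⟩ := Metric.isOpen_iff.mp hUopen w0 hw0U
  set r : ℝ := min r0 (1/4) with hr
  have hrpos : 0 < r := lt_min hr0pos (by norm_num)
  have hrle : r ≤ 1/4 := min_le_right _ _
  have hrsub : Metric.ball w0 r ⊆ {w : EuclideanSpace ℝ (Fin d) | δ / 2 < |F w|} :=
    (Metric.ball_subset_ball (min_le_left _ _)).trans hr0sub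
  -- bound M for lower-order coefficients
  set G : EuclideanSpace ℝ (Fin d) → ℝ := fun w =>
    ∑ j ∈ Finset.range k, |MvPolynomial.eval (fun i => w i) ((shiftQ x P).coeff j)| with hG
  have hGcont : Continuous G := by
    apply continuous_finset_sum
    intro j _
    exact ((MvPolynomial.continuous_eval _).comp (PiLp.continuous_ofLp 2 fun _ : Fin d => ℝ)).abs
  obtain ⟨z, hzK, hzmax⟩ := (isCompact_closedBall (0 : EuclideanSpace ℝ (Fin d)) 2).exists_isMaxOn
    ⟨0, Metric.mem_closedBall_self (by norm_num)⟩ hGcont.continuousOn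
  set M : ℝ := G z with hM
  have hM0 : 0 ≤ M := Finset.sum_nonneg fun j _ => abs_nonneg _
  set R0 : ℝ := max 2 (4 * M / δ) with hR0
  -- pointwise key estimate
  have key : ∀ R : ℝ, R0 ≤ R → ∀ y ∈ Metric.ball (x + R • w0) (r * R),
      δ / 4 * R ^ k ≤ |MvPolynomial.eval (fun i => y i) P| := by
    intro R hR y hy
    have hR2 : 2 ≤ R := le_trans (le_max_left _ _) hR
    have hR0' : (0:ℝ) < R := by linarith
    have hR1 : (1:ℝ) ≤ R := by linarith
    have hRM : M ≤ δ / 4 * R := by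
      have h4 : 4 * M / δ ≤ R := le_trans (le_max_right _ _) hR
      rw [div_le_iff₀ hδ] at h4
      linarith
    set w : EuclideanSpace ℝ (Fin d) := R⁻¹ • (y - x) with hw
    have hyw : y = x + R • w := by
      rw [hw, smul_inv_smul₀ (ne_of_gt hR0')]
      abel
    have hwdist : dist w w0 < r := by
      have hsub : w - w0 = R⁻¹ • (y - (x + R • w0)) := by
        rw [hw, smul_sub, smul_sub, smul_add, inv_smul_smul₀ (ne_of_gt hR0')]
        abel
      have : dist w w0 = R⁻¹ * dist y (x + R • w0) := by
        rw [dist_eq_norm, hsub, norm_smul, Real.norm_eq_abs, abs_of_pos (by positivity),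
          dist_eq_norm]
      rw [this]
      rw [Metric.mem_ball] at hy
      calc R⁻¹ * dist y (x + R • w0) < R⁻¹ * (r * R) := by
            apply mul_lt_mul_of_pos_left hy (by positivity)
        _ = r := by field_simp
    have hwF : δ / 2 < |F w| := hrsub (Metric.mem_ball.mpr hwdist)
    have hwK : w ∈ Metric.closedBall (0 : EuclideanSpace ℝ (Fin d)) 2 := by
      rw [Metric.mem_closedBall, dist_zero_right]
      have h1 : ‖w‖ ≤ ‖w0‖ + ‖w - w0‖ := by
        calc ‖w‖ = ‖w0 + (w - w0)‖ := by rw [show w0 + (w - w0) = w from by abel]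
          _ ≤ ‖w0‖ + ‖w - w0‖ := norm_add_le _ _
      have h2 : ‖w - w0‖ < r := by rw [← dist_eq_norm]; exact hwdist
      rw [hw0norm] at h1
      linarith
    have hGw : G w ≤ M := isMaxOn_iff.mp hzmax w hwK
    -- expansion
    have hcoord : (fun i => y i) = fun i => x i + R * w i := by
      funext i
      rw [hyw]
      simp [PiLp.add_apply, PiLp.smul_apply]
    have hnat : (Polynomial.map (MvPolynomial.eval fun i => w i) (shiftQ x P)).natDegree < k + 1 := by
      refine lt_of_le_of_lt Polynomial.natDegree_map_le ?_
      rw [← hdeg] at *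
      exact Nat.lt_succ_of_le (natDegree_shiftQ_le x P)
    have hval : MvPolynomial.eval (fun i => y i) P
        = (∑ j ∈ Finset.range k,
            MvPolynomial.eval (fun i => w i) ((shiftQ x P).coeff j) * R ^ j)
          + F w * R ^ k := by
      rw [hcoord, ← eval_shiftQ x P R (fun i => w i),
        Polynomial.eval_eq_sum_range' hnat]
      simp only [Polynomial.coeff_map]
      rw [Finset.sum_range_succ]
      congr 1
      have : (shiftQ x P).coeff k = H := by rw [hH, ← hdeg]; exact coeff_shiftQ_totalDegree x P
      rw [this]
    set T : ℝ := ∑ j ∈ Finset.range k,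
      MvPolynomial.eval (fun i => w i) ((shiftQ x P).coeff j) * R ^ j with hT
    have hTbound : |T| ≤ δ / 4 * R ^ k := by
      have hRk : R ^ k = R ^ (k - 1) * R := by
        rw [← pow_succ]
        congr 1
        omega
      calc |T| ≤ ∑ j ∈ Finset.range k,
            |MvPolynomial.eval (fun i => w i) ((shiftQ x P).coeff j) * R ^ j| :=
            Finset.abs_sum_le_sum_abs _ _
        _ ≤ ∑ j ∈ Finset.range k,
            |MvPolynomial.eval (fun i => w i) ((shiftQ x P).coeff j)| * R ^ (k - 1) := by
            apply Finset.sum_le_sum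
            intro j hj
            rw [abs_mul, abs_pow, abs_of_pos hR0']
            apply mul_le_mul_of_nonneg_left _ (abs_nonneg _)
            exact pow_le_pow_right₀ hR1 (by simp at hj; omega)
        _ = G w * R ^ (k - 1) := by rw [hG, Finset.sum_mul]
        _ ≤ M * R ^ (k - 1) := by
            apply mul_le_mul_of_nonneg_right hGw (by positivity)
        _ ≤ (δ / 4 * R) * R ^ (k - 1) := by
            apply mul_le_mul_of_nonneg_right hRM (by positivity)
        _ = δ / 4 * R ^ k := by rw [hRk]; ring
    have hFRk : δ / 2 * R ^ k ≤ |F w * R ^ k| := by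
      rw [abs_mul, abs_pow, abs_of_pos hR0']
      apply mul_le_mul_of_nonneg_right (le_of_lt hwF) (by positivity)
    have habs : |F w * R ^ k| - |T| ≤ |T + F w * R ^ k| := by
      have h := abs_add_le (T + F w * R ^ k) (-T)
      rw [show T + F w * R ^ k + -T = F w * R ^ k from by ring, abs_neg] at h
      linarith
    rw [hval]
    linarith
  -- the constant
  set c : ENNReal := ENNReal.ofReal (δ / 4 * r ^ d) *
    volume (Metric.ball (0 : EuclideanSpace ℝ (Fin d)) 1) with hc
  have hcpos : 0 < c := by
    rw [hc]
    apply ENNReal.mul_pos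
    · simp only [ne_eq, ENNReal.ofReal_eq_zero, not_le]
      positivity
    · exact (Metric.measure_ball_pos volume _ one_pos).ne'
  refine lt_of_lt_of_le hcpos (Filter.le_liminf_of_le (by isBoundedDefault) ?_)
  rw [eventually_atTop]
  refine ⟨R0, fun R hR => ?_⟩
  have hR2 : 2 ≤ R := le_trans (le_max_left _ _) hR
  have hR0' : (0:ℝ) < R := by linarith
  -- ball inside annulus
  have hsub : Metric.ball (x + R • w0) (r * R)
      ⊆ {y : EuclideanSpace ℝ (Fin d) | R < dist x y ∧ dist x y < 2 * R} := by
    intro y hy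
    rw [Metric.mem_ball] at hy
    have hcd : dist x (x + R • w0) = 3 / 2 * R := by
      rw [dist_eq_norm]
      have : x - (x + R • w0) = -(R • w0) := by abel
      rw [this, norm_neg, norm_smul, Real.norm_eq_abs, abs_of_pos hR0', hw0norm]
      ring
    have ht1 : dist x y ≤ dist x (x + R • w0) + dist (x + R • w0) y := dist_triangle _ _ _
    have ht2 : dist x (x + R • w0) ≤ dist x y + dist y (x + R • w0) := dist_triangle _ _ _
    rw [dist_comm (x + R • w0) y] at ht1
    have hrR : r * R ≤ 1 / 4 * R := mul_le_mul_of_nonneg_right hrle (le_of_lt hR0')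
    constructor
    · rw [hcd] at ht2; nlinarith
    · rw [hcd] at ht1; nlinarith
  have hvol : volume (Metric.ball (x + R • w0) (r * R))
      = ENNReal.ofReal ((r * R) ^ d) *
        volume (Metric.ball (0 : EuclideanSpace ℝ (Fin d)) 1) := by
    rw [Measure.addHaar_ball _ _ (by positivity : (0:ℝ) ≤ r * R), finrank_euclideanSpace_fin]
  have hlow : ENNReal.ofReal (δ / 4 * R ^ k) * volume (Metric.ball (x + R • w0) (r * R))
      ≤ ∫⁻ y in {y : EuclideanSpace ℝ (Fin d) | R < dist x y ∧ dist x y < 2 * R},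
          ENNReal.ofReal |MvPolynomial.eval (fun i => y i) P| := by
    calc ENNReal.ofReal (δ / 4 * R ^ k) * volume (Metric.ball (x + R • w0) (r * R))
        = ∫⁻ _ in Metric.ball (x + R • w0) (r * R),
            ENNReal.ofReal (δ / 4 * R ^ k) ∂volume := (setLIntegral_const _ _).symm
      _ ≤ ∫⁻ y in Metric.ball (x + R • w0) (r * R),
            ENNReal.ofReal |MvPolynomial.eval (fun i => y i) P| ∂volume := by
          apply setLIntegral_mono' Metric.isOpen_ball.measurableSet
          intro y hy
          exact ENNReal.ofReal_le_ofReal (key R hR y hy)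
      _ ≤ _ := lintegral_mono_set hsub
  rw [ENNReal.le_div_iff_mul_le
    (Or.inl (by simp only [ne_eq, ENNReal.ofReal_eq_zero, not_le]; positivity))
    (Or.inl ENNReal.ofReal_ne_top)]
  calc c * ENNReal.ofReal (R ^ (d + k))
      = ENNReal.ofReal (δ / 4 * r ^ d) * ENNReal.ofReal (R ^ (d + k)) *
        volume (Metric.ball (0 : EuclideanSpace ℝ (Fin d)) 1) := by rw [hc]; ring
    _ = ENNReal.ofReal (δ / 4 * R ^ k) * (ENNReal.ofReal ((r * R) ^ d) *
        volume (Metric.ball (0 : EuclideanSpace ℝ (Fin d)) 1)) := by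
        have e1 : ENNReal.ofReal (δ / 4 * r ^ d) * ENNReal.ofReal (R ^ (d + k))
            = ENNReal.ofReal ((δ / 4 * r ^ d) * R ^ (d + k)) :=
          (ENNReal.ofReal_mul (by positivity)).symm
        have e2 : ENNReal.ofReal (δ / 4 * R ^ k) * ENNReal.ofReal ((r * R) ^ d)
            = ENNReal.ofReal ((δ / 4 * R ^ k) * (r * R) ^ d) :=
          (ENNReal.ofReal_mul (by positivity)).symm
        rw [e1, ← mul_assoc, e2]
        congr 1
        ring
    _ = ENNReal.ofReal (δ / 4 * R ^ k) * volume (Metric.ball (x + R • w0) (r * R)) := by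
        rw [hvol]
    _ ≤ _ := hlow
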